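/- arXiv:2311.18184 — 2 statements merged into one kernel-verified Lean document; each statement's English description precedes it below -/
import Mathlib

section
/- Let φ be a singular-expansive flow on a compact metric space X. If Sing(φ) is empty, or consists of finitely many points each of which is an isolated point of X, then φ is expansive. -/
open Set Metric Filter
open scoped Classical

variable {X : Type*}

/-- A (continuous) flow on a topological space, given as a map `φ : ℝ → X → X`. -/
def IsFlowMap [TopologicalSpace X] (φ : ℝ → X → X) : Prop :=
  Continuous (fun p : ℝ × X => φ p.1 p.2) ∧ (∀ x : X, φ 0 x = x) ∧
    ∀ t s : ℝ, ∀ x : X, φ (t + s) x = φ t (φ s x)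

/-- The singular set of a flow. -/
def SingSet (φ : ℝ → X → X) : Set X := {x : X | ∀ t : ℝ, φ t x = x}

/-- An increasing homeomorphism of `ℝ`: a strictly increasing continuous bijection. -/
def IncreasingHomeo (s : ℝ → ℝ) : Prop :=
  Continuous s ∧ StrictMono s ∧ Function.Bijective s

/-- Distance from a point to a set, with the convention that the distance
to the empty set is the diameter of the whole space. -/
noncomputable def distToSet [MetricSpace X] (z : X) (A : Set X) : ℝ :=
  if A = ∅ then Metric.diam (Set.univ : Set X) else Metric.infDist z A

/-- The orbit of a point under a flow. -/
def flowOrbit (φ : ℝ → X → X) (x : X) : Set X := Set.range fun t : ℝ => φ t x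

/-- Bowen–Walters expansivity of a flow on a subset `Λ`. -/
def ExpansiveOn [MetricSpace X] (φ : ℝ → X → X) (Λ : Set X) : Prop :=
  ∀ ε > (0:ℝ), ∃ δ > (0:ℝ), ∀ x ∈ Λ, ∀ y ∈ Λ, ∀ s : ℝ → ℝ, Continuous s → s 0 = 0 →
    (∀ t : ℝ, dist (φ t x) (φ (s t) y) ≤ δ) →
    ∃ τ ∈ Set.Icc (-ε) ε, y = φ τ x

/-- Komuro k*-expansivity of a flow on a subset `Λ`. -/
def KStarExpansiveOn [MetricSpace X] (φ : ℝ → X → X) (Λ : Set X) : Prop :=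
  ∀ ε > (0:ℝ), ∃ δ > (0:ℝ), ∀ x ∈ Λ, ∀ y ∈ Λ, ∀ s : ℝ → ℝ,
    IncreasingHomeo s → s 0 = 0 →
    (∀ t : ℝ, dist (φ t x) (φ (s t) y) ≤ δ) →
    ∃ t₀ : ℝ, ∃ τ ∈ Set.Icc (t₀ - ε) (t₀ + ε), φ (s t₀) y = φ τ x

/-- Singular expansivity of a flow on a subset `Λ`. -/
def SingularExpansiveOn [MetricSpace X] (φ : ℝ → X → X) (Λ : Set X) : Prop :=
  ∀ ε > (0:ℝ), ∃ δ > (0:ℝ), ∀ x ∈ Λ, ∀ y ∈ Λ, ∀ s : ℝ → ℝ, IncreasingHomeo s →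
    (∀ t : ℝ, dist (φ t x) (φ (s t) y) ≤ δ * distToSet (φ t x) (SingSet φ)) →
    ∃ t₀ : ℝ, ∃ τ ∈ Set.Icc (t₀ - ε) (t₀ + ε), φ (s t₀) y = φ τ x

/-- A periodic point of a flow: a nonsingular point with a positive period. -/
def IsPeriodicPoint (φ : ℝ → X → X) (x : X) : Prop :=
  x ∉ SingSet φ ∧ ∃ t : ℝ, 0 < t ∧ φ t x = x

/-- An invariant set `K` is dynamically isolated if it has a neighborhood `U`
with `K = ⋂_{t ∈ ℝ} φ_t(U)`. -/
def DynIsolated [TopologicalSpace X] (φ : ℝ → X → X) (K : Set X) : Prop :=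
  ∃ U : Set X, K ⊆ interior U ∧ K = ⋂ t : ℝ, φ t '' U

/-- Equicontinuity of a flow. -/
def EquicontinuousFlow [MetricSpace X] (φ : ℝ → X → X) : Prop :=
  ∀ ε > (0:ℝ), ∃ δ > (0:ℝ), ∀ x y : X, dist x y ≤ δ →
    ∀ t : ℝ, dist (φ t x) (φ t y) ≤ ε

/-- Singular equicontinuity of a flow. -/
def SingularEquicontinuous [MetricSpace X] (φ : ℝ → X → X) : Prop :=
  ∀ ε > (0:ℝ), ∃ δ > (0:ℝ), ∀ x y : X, dist x y ≤ δ * distToSet x (SingSet φ) →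
    ∀ t : ℝ, dist (φ t x) (φ t y) ≤ ε

/-!
The singular set is finite and consists of isolated points, so it is open and the nonsingular
points form a compact invariant set without fixed points. There the flow has no small periods,
hence `dist (φ t z) z` is bounded below uniformly for `a ≤ |t| ≤ T`, and `distToSet z (SingSet φ)`
is bounded below by some `r₀ > 0`.

Let `y` follow `x` within `δ` along a continuous reparametrization `s` with `s 0 = 0`. The
displacement bounds force `s` to vary little on windows of a fixed length `L` and to advance by a
definite amount across each of them, so averaging `s` over such windows gives an increasing
homeomorphism `u` close to `s`. As `δ` is small compared to `r₀`, singular expansivity applies to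
`u` and gives `y = φ c x`. Since `φ (u t) y` stays close to `φ t x`, the continuous function
`t ↦ u t + c - t` never takes the values `±ε'`, so it stays in `(-ε', ε')` and `c` is small.
Singular points are uniformly isolated, which settles the pairs containing one.
-/

open Topology

theorem increasingHomeo_of_mul_sub_le {u : ℝ → ℝ} (hu : Continuous u) {k : ℝ} (hk : 0 < k)
    (h : ∀ a b, a ≤ b → k * (b - a) ≤ u b - u a) : IncreasingHomeo u := by
  have hmono : StrictMono u := fun a b hab => by nlinarith [h a b hab.le]
  refine ⟨hu, hmono, hmono.injective, hu.surjective ?_ ?_⟩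
  · refine tendsto_atTop_mono' _ ?_
      (tendsto_atTop_add_const_left _ (u 0) (tendsto_id.const_mul_atTop hk))
    filter_upwards [eventually_ge_atTop 0] with t ht
    simp only [id]
    linarith [h 0 t ht]
  · refine tendsto_atBot_mono' _ ?_
      (tendsto_atBot_add_const_left _ (u 0) (tendsto_id.const_mul_atBot hk))
    filter_upwards [eventually_le_atBot 0] with t ht
    simp only [id]
    linarith [h t 0 ht]

/-- Averaging `s` over windows of length `L` straightens it into an increasing homeomorphism. -/
theorem Continuous.exists_increasingHomeo_abs_sub_le {s : ℝ → ℝ} (hs : Continuous s)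
    {L r c : ℝ} (hL : 0 < L) (hc : 0 < c) (hwin : ∀ t₁ t₂, |t₁ - t₂| ≤ L → |s t₁ - s t₂| ≤ r)
    (hadv : ∀ t, c ≤ s (t + L) - s t) :
    ∃ u, IncreasingHomeo u ∧ ∀ t, |u t - s t| ≤ r := by
  set F : ℝ → ℝ := fun t => ∫ v in (0 : ℝ)..t, s v
  have hF : ∀ t, HasDerivAt F (s t) t := fun t => (hs.integral_hasStrictDerivAt 0 t).hasDerivAt
  set u : ℝ → ℝ := fun t => (F (t + L) - F t) / L
  have hu : ∀ t, HasDerivAt u ((s (t + L) - s t) / L) t := fun t =>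
    (((hF (t + L)).comp_add_const t L).sub (hF t)).div_const L
  have hu_diff : Differentiable ℝ u := fun t => (hu t).differentiableAt
  have hderiv : ∀ t, c / L ≤ deriv u t := fun t => by
    rw [(hu t).deriv]
    exact div_le_div_of_nonneg_right (hadv t) hL.le
  refine ⟨u, increasingHomeo_of_mul_sub_le hu_diff.continuous (div_pos hc hL)
    fun a b hab => mul_sub_le_image_sub_of_le_deriv hu_diff hderiv hab, fun t => ?_⟩
  -- `u t` is the mean of `s` over `[t, t + L]`, hence a value of `s` there
  obtain ⟨ξ, hξ, hslope⟩ := exists_hasDerivAt_eq_slope F s (lt_add_of_pos_right t hL)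
    (Differentiable.continuous fun t => (hF t).differentiableAt).continuousOn fun t _ => hF t
  have huξ : u t = s ξ := by rw [hslope, add_sub_cancel_left]
  rw [huξ]
  exact hwin ξ t (by rw [abs_of_pos (sub_pos.2 hξ.1)]; linarith [hξ.2])

theorem abs_sub_le_of_forall_dist_le [PseudoMetricSpace X] {φ : ℝ → X → X} {x y : X}
    {s : ℝ → ℝ} (hs : Continuous s) {δ L r η : ℝ} (hclose : ∀ t, dist (φ t x) (φ (s t) y) ≤ δ)
    (hr : 0 ≤ r) (hx : ∀ t₁ t₂, |t₁ - t₂| ≤ L → dist (φ t₁ x) (φ t₂ x) ≤ η)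
    (hy : ∀ t₁ t₂, |t₁ - t₂| = r → 2 * δ + η < dist (φ t₁ y) (φ t₂ y))
    (t₁ t₂ : ℝ) (ht : |t₁ - t₂| ≤ L) : |s t₁ - s t₂| ≤ r := by
  by_contra! hgt
  obtain ⟨t, ht', hst⟩ : r ∈ (fun t => |s t - s t₂|) '' Set.uIcc t₂ t₁ :=
    intermediate_value_uIcc (by fun_prop) (Set.mem_uIcc.2 (Or.inl ⟨by simpa using hr, hgt.le⟩))
  have hxt := hx t t₂ ((abs_sub_left_of_mem_uIcc ht').trans ht)
  have := dist_triangle4 (φ (s t) y) (φ t x) (φ t₂ x) (φ (s t₂) y)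
  rw [dist_comm (φ (s t) y) (φ t x)] at this
  linarith [hy (s t) (s t₂) hst, hclose t, hclose t₂]

theorem abs_add_sub_lt_of_forall_dist_lt [PseudoMetricSpace X] {φ : ℝ → X → X} {x : X}
    {u : ℝ → ℝ} (hu : Continuous u) {a m c t₀ : ℝ}
    (hfar : ∀ t₁ t₂, |t₁ - t₂| = a → m ≤ dist (φ t₁ x) (φ t₂ x))
    (hclose : ∀ t, dist (φ t x) (φ (u t + c) x) < m) (ht₀ : |u t₀ + c - t₀| ≤ a) (t : ℝ) :
    |u t + c - t| < a := by
  by_contra! h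
  obtain ⟨t', ht'⟩ := intermediate_value_univ t₀ t (f := fun t => |u t + c - t|) (by fun_prop)
    ⟨ht₀, h⟩
  exact (hclose t').not_ge (dist_comm (φ t' x) _ ▸ hfar _ _ ht')

theorem Set.Finite.exists_pos_forall_eq_of_dist_lt [PseudoMetricSpace X] {S : Set X}
    (hS : S.Finite) (hiso : ∀ x ∈ S, IsOpen ({x} : Set X)) :
    ∃ ρ > 0, ∀ x ∈ S, ∀ y, dist y x < ρ → y = x := by
  have : ∀ᶠ ρ in 𝓝[>] (0 : ℝ), ∀ x ∈ S, ∀ y : X, dist y x < ρ → y = x :=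
    hS.eventually_all.2 fun x hx => by
      obtain ⟨ε, hε, h⟩ := Metric.isOpen_singleton_iff.1 (hiso x hx)
      filter_upwards [Ioo_mem_nhdsGT hε] with ρ hρ y hy using h y (hy.trans hρ.2)
  obtain ⟨ρ, hρ, hρ0⟩ := (this.and self_mem_nhdsWithin).exists
  exact ⟨ρ, hρ0, hρ⟩

theorem exists_pos_le_distToSet [MetricSpace X] [CompactSpace X] [Nontrivial X] {S : Set X}
    {ρ : ℝ} (hρ : 0 < ρ) (hiso : ∀ x ∈ S, ∀ y, dist y x < ρ → y = x) :
    ∃ r > 0, ∀ z ∉ S, r ≤ distToSet z S := by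
  refine ⟨min ρ (diam (univ : Set X)),
    lt_min hρ (diam_pos nontrivial_univ isCompact_univ.isBounded), fun z hz => ?_⟩
  unfold distToSet
  split_ifs with hS
  · exact min_le_right _ _
  · exact (le_infDist (nonempty_iff_ne_empty.2 hS)).2 fun σ hσ =>
      (min_le_left _ _).trans (not_lt.1 fun h => hz (hiso σ hσ z h ▸ hσ))

namespace IsFlowMap

section TopologicalSpace

variable [TopologicalSpace X] {φ : ℝ → X → X}

theorem continuous_apply (hφ : IsFlowMap φ) (t : ℝ) : Continuous (φ t) :=
  hφ.1.comp (Continuous.prodMk_right t)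

theorem zero_apply (hφ : IsFlowMap φ) (z : X) : φ 0 z = z :=
  hφ.2.1 z

theorem apply_apply (hφ : IsFlowMap φ) (a b : ℝ) (z : X) : φ a (φ b z) = φ (a + b) z :=
  (hφ.2.2 a b z).symm

theorem eq_apply_of_apply_eq (hφ : IsFlowMap φ) {a b : ℝ} {y z : X} (h : φ a y = φ b z) :
    y = φ (b - a) z := by
  rw [sub_eq_neg_add, ← hφ.apply_apply, ← h, hφ.apply_apply, neg_add_cancel, hφ.zero_apply]

theorem apply_neg_eq_self (hφ : IsFlowMap φ) {t : ℝ} {z : X} (h : φ t z = z) :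
    φ (-t) z = z := by
  simpa using (hφ.eq_apply_of_apply_eq (h.trans (hφ.zero_apply z).symm)).symm

theorem apply_zsmul_eq_self (hφ : IsFlowMap φ) {p : ℝ} {z : X} (h : φ p z = z) (k : ℤ) :
    φ (k • p) z = z := by
  induction k using Int.induction_on with
  | zero => simpa using hφ.zero_apply z
  | succ k ih => rw [add_zsmul, one_zsmul, add_comm, ← hφ.apply_apply, ih, h]
  | pred k ih =>
    rw [sub_zsmul, one_zsmul, add_comm, ← hφ.apply_apply, ih, hφ.apply_neg_eq_self h]

theorem apply_toIcoMod (hφ : IsFlowMap φ) {p : ℝ} (hp : 0 < p) {z : X} (h : φ p z = z)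
    (t : ℝ) : φ (toIcoMod hp 0 t) z = φ t z := by
  rw [← self_sub_toIcoDiv_zsmul, sub_eq_add_neg, ← neg_zsmul, ← hφ.apply_apply,
    hφ.apply_zsmul_eq_self h]

theorem apply_notMem_singSet (hφ : IsFlowMap φ) {z : X} (hz : z ∉ SingSet φ) (t : ℝ) :
    φ t z ∉ SingSet φ := by
  intro ht
  have hzt : z = φ t z := by
    rw [← ht (-t), hφ.apply_apply, neg_add_cancel, hφ.zero_apply]
  exact hz fun u => by rw [hzt]; exact ht u

end TopologicalSpace

section MetricSpace

variable [MetricSpace X] {φ : ℝ → X → X}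

theorem exists_pos_le_dist_apply (hφ : IsFlowMap φ) {Y : Set X} (hY : IsCompact Y) {a b : ℝ}
    (hne : ∀ z ∈ Y, ∀ t, a ≤ |t| → |t| ≤ b → φ t z ≠ z) :
    ∃ m > 0, ∀ z ∈ Y, ∀ t, a ≤ |t| → |t| ≤ b → m ≤ dist (φ t z) z := by
  have hA : IsCompact {t : ℝ | a ≤ |t| ∧ |t| ≤ b} :=
    Metric.isCompact_of_isClosed_isBounded
      ((isClosed_le continuous_const continuous_abs).inter
        (isClosed_le continuous_abs continuous_const))
      ((Metric.isBounded_Icc (-b) b).subset fun t ht => abs_le.1 ht.2)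
  obtain ⟨m, hm, hmin⟩ := (hA.prod hY).exists_forall_le'
    (f := fun q : ℝ × X => dist (φ q.1 q.2) q.2) (hφ.1.dist continuous_snd).continuousOn
    (a := 0) fun q hq => dist_pos.2 (hne q.2 hq.2 q.1 hq.1.1 hq.1.2)
  exact ⟨m, hm, fun z hz t ha hb => hmin (t, z) ⟨⟨ha, hb⟩, hz⟩⟩

theorem le_sub_of_forall_dist_le (hφ : IsFlowMap φ) {x y : X} {s : ℝ → ℝ} {δ L r c m : ℝ}
    (hclose : ∀ t, dist (φ t x) (φ (s t) y) ≤ δ) (hδ : δ < m / 4) (hL : 0 ≤ L)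
    (hwin : ∀ t, |s (t + L) - s t| ≤ r) (hx : ∀ t, m ≤ dist (φ (t + L) x) (φ t x))
    (hy_far : ∀ t₁ t₂, L ≤ |t₁ - t₂| → |t₁ - t₂| ≤ L + r → m ≤ dist (φ t₁ y) (φ t₂ y))
    (hy_near : ∀ t₁ t₂, |t₁ - t₂| ≤ c → dist (φ t₁ y) (φ t₂ y) ≤ m / 4)
    (hflow : ∀ p q, dist p q ≤ δ → dist (φ L p) (φ L q) ≤ m / 4) (t : ℝ) :
    c ≤ s (t + L) - s t := by
  have hδ0 : 0 ≤ δ := dist_nonneg.trans (hclose 0)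
  have hfar : m / 4 < dist (φ (s (t + L)) y) (φ (s t) y) := by
    have := dist_triangle4 (φ (t + L) x) (φ (s (t + L)) y) (φ (s t) y) (φ t x)
    rw [dist_comm (φ (s t) y)] at this
    linarith [hx t, hclose (t + L), hclose t]
  have hc : c < |s (t + L) - s t| := by
    by_contra! h
    linarith [hy_near _ _ h]
  rcases abs_cases (s (t + L) - s t) with ⟨habs, -⟩ | ⟨habs, hneg⟩
  · linarith
  -- after a backward step, `φ L (φ (s t) y)` is near `φ (t + L) x` but far from `φ (s (t + L)) y`
  have hwin' := abs_le.1 (hwin t)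
  have hfar' := hy_far (L + s t) (s (t + L)) (le_abs.2 (Or.inl (by linarith)))
    (abs_le.2 ⟨by linarith, by linarith⟩)
  have hnear := hflow _ _ (hclose t)
  rw [hφ.apply_apply, hφ.apply_apply, add_comm L t] at hnear
  linarith [dist_triangle (φ (L + s t) y) (φ (t + L) x) (φ (s (t + L)) y), hclose (t + L),
    dist_comm (φ (t + L) x) (φ (L + s t) y)]

end MetricSpace

section CompactSpace

variable [MetricSpace X] [CompactSpace X] {φ : ℝ → X → X}

theorem exists_dist_apply_le (hφ : IsFlowMap φ) {a : ℝ} (ha : 0 < a) :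
    ∃ R > 0, ∀ z t₁ t₂, |t₁ - t₂| ≤ R → dist (φ t₁ z) (φ t₂ z) ≤ a := by
  obtain ⟨θ, hθ, hunif⟩ := Metric.uniformContinuousOn_iff_le.1
    ((isCompact_Icc (a := (-1 : ℝ)) (b := 1)).prod isCompact_univ
      |>.uniformContinuousOn_of_continuous hφ.1.continuousOn) a ha
  refine ⟨min θ 1, by positivity, fun z t₁ t₂ ht => ?_⟩
  have := hunif (t₁ - t₂, φ t₂ z) ⟨abs_le.1 (ht.trans (min_le_right _ _)), trivial⟩
    (0, φ t₂ z) ⟨by norm_num, trivial⟩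
    (by simpa [Prod.dist_eq, Real.dist_eq] using ht.trans (min_le_left _ _))
  simpa [hφ.apply_apply, hφ.zero_apply] using this

theorem exists_pos_forall_apply_ne (hφ : IsFlowMap φ) {Y : Set X} (hY : IsCompact Y)
    (hYS : ∀ z ∈ Y, z ∉ SingSet φ) :
    ∃ T > 0, ∀ z ∈ Y, ∀ p, 0 < p → p ≤ T → φ p z ≠ z := by
  have hloc : ∀ z ∈ Y, ∀ᶠ q : ℝ × X in 𝓝 (0, z), ∀ p, 0 < p → p ≤ q.1 → φ p q.2 ≠ q.2 := by
    intro z hz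
    obtain ⟨t, ht⟩ : ∃ t, φ t z ≠ z := by simpa [SingSet] using hYS z hz
    have ht' : 0 < dist (φ t z) z := dist_pos.2 ht
    obtain ⟨R, hR, hnear⟩ := hφ.exists_dist_apply_le (half_pos ht')
    have hopen : IsOpen {w | dist (φ t z) z / 2 < dist (φ t w) w} :=
      isOpen_lt continuous_const ((hφ.continuous_apply t).dist continuous_id)
    rw [nhds_prod_eq]
    filter_upwards [prod_mem_prod (Iio_mem_nhds hR) (hopen.mem_nhds (half_lt_self ht'))]
      with ⟨T, w⟩ ⟨hT, hw⟩ p hp hpT hper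
    -- reduced modulo the period `p`, the time `t` becomes shorter than `R`
    have := hnear w (toIcoMod hp 0 t) 0 (by
      have := toIcoMod_mem_Ico' hp t
      rw [sub_zero, abs_of_nonneg this.1]
      linarith [this.2, show T < R from hT])
    rw [hφ.apply_toIcoMod hp hper, hφ.zero_apply] at this
    exact lt_irrefl _ (hw.trans_le this)
  obtain ⟨T, hT, hT0⟩ := (((hY.eventually_forall_of_forall_eventually
    (P := fun T w => ∀ p, 0 < p → p ≤ T → φ p w ≠ w) hloc).filter_mono
    nhdsWithin_le_nhds).and (self_mem_nhdsWithin (s := Ioi (0 : ℝ)))).exists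
  exact ⟨T, hT0, hT⟩

theorem exists_pos_le_dist_apply_apply (hφ : IsFlowMap φ) (hS : IsOpen (SingSet φ)) :
    ∃ T > 0, ∀ a > 0, ∃ m > 0, ∀ z ∉ SingSet φ, ∀ t₁ t₂,
      a ≤ |t₁ - t₂| → |t₁ - t₂| ≤ T → m ≤ dist (φ t₁ z) (φ t₂ z) := by
  have hY : IsCompact (SingSet φ)ᶜ := hS.isClosed_compl.isCompact
  obtain ⟨T, hT, hper⟩ := hφ.exists_pos_forall_apply_ne hY fun _ hz => hz
  refine ⟨T, hT, fun a ha => ?_⟩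
  obtain ⟨m, hm, hfar⟩ := hφ.exists_pos_le_dist_apply hY (a := a) (b := T)
    fun z hz t hat htT hfix => by
      rcases abs_cases t with ⟨habs, -⟩ | ⟨habs, -⟩
      · exact hper z hz t (by linarith) (by linarith) hfix
      · exact hper z hz (-t) (by linarith) (by linarith) (hφ.apply_neg_eq_self hfix)
  refine ⟨m, hm, fun z hz t₁ t₂ ha hT => ?_⟩
  simpa [hφ.apply_apply] using hfar _ (hφ.apply_notMem_singSet hz t₂) (t₁ - t₂) ha hT

theorem exists_increasingHomeo_abs_sub_le_of_dist_le (hφ : IsFlowMap φ)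
    (hS : IsOpen (SingSet φ)) {r : ℝ} (hr : 0 < r) :
    ∃ δ > 0, ∀ x y, x ∉ SingSet φ → y ∉ SingSet φ → ∀ s, Continuous s →
      (∀ t, dist (φ t x) (φ (s t) y) ≤ δ) → ∃ u, IncreasingHomeo u ∧ ∀ t, |u t - s t| ≤ r := by
  obtain ⟨T, hT, hann⟩ := hφ.exists_pos_le_dist_apply_apply hS
  set r' := min r (T / 2)
  have hr' : 0 < r' := by positivity
  obtain ⟨m₁, hm₁, hfar₁⟩ := hann r' hr'
  obtain ⟨R, hR, hnear₁⟩ := hφ.exists_dist_apply_le (a := m₁ / 4) (by positivity)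
  set L := min R (T / 2)
  have hL : 0 < L := by positivity
  obtain ⟨m₂, hm₂, hfar₂⟩ := hann L hL
  obtain ⟨c, hc, hnear₂⟩ := hφ.exists_dist_apply_le (a := m₂ / 4) (by positivity)
  obtain ⟨θ, hθ, hflow⟩ := Metric.uniformContinuous_iff_le.1
    (CompactSpace.uniformContinuous_of_continuous (hφ.continuous_apply L)) (m₂ / 4)
    (by positivity)
  set δ := min (min (m₁ / 4) (m₂ / 8)) θ
  have hδ₁ : δ ≤ m₁ / 4 := (min_le_left _ _).trans (min_le_left _ _)
  have hδ₂ : δ ≤ m₂ / 8 := (min_le_left _ _).trans (min_le_right _ _)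
  have hr'T : r' ≤ T / 2 := min_le_right _ _
  have hLT : L ≤ T / 2 := min_le_right _ _
  refine ⟨δ, by positivity, fun x y hx hy s hs hclose => ?_⟩
  have hwin : ∀ t₁ t₂, |t₁ - t₂| ≤ L → |s t₁ - s t₂| ≤ r' :=
    abs_sub_le_of_forall_dist_le hs hclose hr'.le
      (fun t₁ t₂ h => hnear₁ x t₁ t₂ (h.trans (min_le_left _ _)))
      (fun t₁ t₂ h => by linarith [hfar₁ y hy t₁ t₂ h.ge (by linarith)])
  have hLL : ∀ t, |t + L - t| = L := fun t => by rw [add_sub_cancel_left, abs_of_pos hL]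
  have hadv := hφ.le_sub_of_forall_dist_le hclose (by linarith) hL.le
    (fun t => hwin (t + L) t (hLL t).le)
    (fun t => hfar₂ x hx _ _ (hLL t).ge (by linarith [hLL t]))
    (fun t₁ t₂ h₁ h₂ => hfar₂ y hy t₁ t₂ h₁ (by linarith)) (hnear₂ y)
    (fun p q h => hflow (h.trans (min_le_right _ _)))
  obtain ⟨u, hu, hus⟩ := hs.exists_increasingHomeo_abs_sub_le hL hc hwin hadv
  exact ⟨u, hu, fun t => (hus t).trans (min_le_left _ _)⟩

theorem exists_expansive_of_notMem_singSet (hφ : IsFlowMap φ) (hS : IsOpen (SingSet φ))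
    (h : SingularExpansiveOn φ univ) {r₀ : ℝ} (hr₀ : 0 < r₀)
    (hdist : ∀ z ∉ SingSet φ, r₀ ≤ distToSet z (SingSet φ)) {ε : ℝ} (hε : 0 < ε) :
    ∃ δ > 0, ∀ x y, x ∉ SingSet φ → y ∉ SingSet φ → ∀ s, Continuous s → s 0 = 0 →
      (∀ t, dist (φ t x) (φ (s t) y) ≤ δ) → ∃ τ ∈ Icc (-ε) ε, y = φ τ x := by
  obtain ⟨T, hT, hann⟩ := hφ.exists_pos_le_dist_apply_apply hS
  set ε' := min (ε / 2) T
  have hε' : 0 < ε' := by positivity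
  obtain ⟨m, hm, hfar⟩ := hann ε' hε'
  obtain ⟨δ₁, hδ₁, hsing⟩ := h ε' hε'
  obtain ⟨b, hb, hbm, hbr⟩ : ∃ b > 0, 3 * b ≤ m ∧ 3 * b ≤ δ₁ * r₀ :=
    ⟨min m (δ₁ * r₀) / 3, by positivity, by linarith [min_le_left m (δ₁ * r₀)],
      by linarith [min_le_right m (δ₁ * r₀)]⟩
  obtain ⟨R, hR, hnear⟩ := hφ.exists_dist_apply_le hb
  obtain ⟨δ₂, hδ₂, hstraight⟩ := hφ.exists_increasingHomeo_abs_sub_le_of_dist_le hS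
    (r := min R (ε / 2)) (by positivity)
  refine ⟨min δ₂ b, by positivity, fun x y hx hy s hs hs0 hclose => ?_⟩
  obtain ⟨u, hu, hus⟩ := hstraight x y hx hy s hs fun t => (hclose t).trans (min_le_left _ _)
  have hclose' : ∀ t, dist (φ t x) (φ (u t) y) ≤ 2 * b := fun t => by
    have := hnear y (s t) (u t) (by rw [abs_sub_comm]; exact (hus t).trans (min_le_left _ _))
    linarith [dist_triangle (φ t x) (φ (s t) y) (φ (u t) y), (hclose t).trans (min_le_right _ _)]
  obtain ⟨t₀, τ, hτ, hτeq⟩ := hsing x trivial y trivial u hu fun t => calc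
    dist (φ t x) (φ (u t) y) ≤ 2 * b := hclose' t
    _ ≤ δ₁ * r₀ := by linarith
    _ ≤ _ := mul_le_mul_of_nonneg_left (hdist _ (hφ.apply_notMem_singSet hx t)) hδ₁.le
  have hyx := hφ.eq_apply_of_apply_eq hτeq
  have hu0 := abs_add_sub_lt_of_forall_dist_lt hu.1 (t₀ := t₀)
    (fun t₁ t₂ h => hfar x hx t₁ t₂ h.ge (h.le.trans (min_le_right _ _)))
    (fun t => by
      rw [← hφ.apply_apply, ← hyx]
      linarith [hclose' t])
    (by rw [add_sub_cancel]; exact abs_sub_le_iff.2 ⟨by linarith [hτ.2], by linarith [hτ.1]⟩) 0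
  have hs0' : |u 0| ≤ ε / 2 := by simpa [hs0] using (hus 0).trans (min_le_right _ _)
  rw [sub_zero] at hu0
  have := min_le_left (ε / 2) T
  refine ⟨τ - u t₀, ⟨?_, ?_⟩, hyx⟩ <;>
    linarith [abs_lt.1 hu0, abs_le.1 hs0']

end CompactSpace

end IsFlowMap

theorem singular_expansive_finitely_many_isolated_sing_expansive
    [MetricSpace X] [CompactSpace X] (φ : ℝ → X → X) (hφ : IsFlowMap φ)
    (h : SingularExpansiveOn φ Set.univ)
    (hsing : SingSet φ = ∅ ∨
      ((SingSet φ).Finite ∧ ∀ x ∈ SingSet φ, IsOpen ({x} : Set X))) :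
    ExpansiveOn φ Set.univ := by
  obtain ⟨hfin, hiso⟩ : (SingSet φ).Finite ∧ ∀ x ∈ SingSet φ, IsOpen ({x} : Set X) :=
    hsing.elim (fun hempty => by simp [hempty]) id
  have hS : IsOpen (SingSet φ) := isOpen_iff_forall_mem_open.2 fun x hx =>
    ⟨{x}, singleton_subset_iff.2 hx, hiso x hx, rfl⟩
  intro ε hε
  rcases subsingleton_or_nontrivial X with hX | hX
  · exact ⟨1, one_pos, fun x _ y _ _ _ _ _ => ⟨0, by simp [hε.le], Subsingleton.elim _ _⟩⟩
  obtain ⟨ρ, hρ, hρiso⟩ := hfin.exists_pos_forall_eq_of_dist_lt hiso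
  obtain ⟨r₀, hr₀, hr₀dist⟩ := exists_pos_le_distToSet hρ hρiso
  obtain ⟨δ, hδ, hexp⟩ := hφ.exists_expansive_of_notMem_singSet hS h hr₀ hr₀dist hε
  refine ⟨min δ (ρ / 2), by positivity, fun x _ y _ s hs hs0 hclose => ?_⟩
  by_cases hxy : x ∈ SingSet φ ∨ y ∈ SingSet φ
  · have hdist : dist x y < ρ := by
      simpa [hs0, hφ.zero_apply] using
        (hclose 0).trans_lt ((min_le_right _ _).trans_lt (half_lt_self hρ))
    have hyx : y = x := hxy.elim (fun hx => hρiso x hx y (dist_comm x y ▸ hdist))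
      fun hy => (hρiso y hy x hdist).symm
    exact ⟨0, by simp [hε.le], by rw [hφ.zero_apply, hyx]⟩
  obtain ⟨hx, hy⟩ := not_or.1 hxy
  exact hexp x y hx hy s hs hs0 fun t => (hclose t).trans (min_le_left _ _)
end

section
/- Let X = {(0,0)} ∪ ⋃_{n≥1} {z ∈ ℝ² : ‖z‖ = 1/n}, equipped with the Euclidean metric, and let φ : ℝ × X → X be the rotation flow φ_t(x,y) = (x cos t − y sin t, x sin t + y cos t). Then φ is a well-defined flow on X which is not singular-expansive. -/
open Set Metric Filter
open scoped Classical

variable {X : Type*}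

/-- The subset of the plane (identified with `ℂ`) consisting of the origin together
with the circles of radius `1/n`, `n ≥ 1`, centered at the origin. -/
def circlesInv : Set ℂ :=
  {0} ∪ ⋃ n : ℕ, {z : ℂ | ‖z‖ = 1 / ((n : ℝ) + 1)}

lemma rot_mem_circlesInv (t : ℝ) (z : ℂ) (hz : z ∈ circlesInv) :
    Complex.exp (t * Complex.I) * z ∈ circlesInv := by
  rcases hz with hz | hz
  · simp only [Set.mem_singleton_iff] at hz
    left
    simp [hz]
  · right
    simp only [Set.mem_iUnion, Set.mem_setOf_eq] at hz ⊢
    obtain ⟨n, hn⟩ := hz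
    refine ⟨n, ?_⟩
    rw [norm_mul, Complex.norm_exp_ofReal_mul_I, one_mul]
    exact hn

/-- The rotation flow on `circlesInv`. -/
noncomputable def rotFlowInv : ℝ → circlesInv → circlesInv := fun t z =>
  ⟨Complex.exp (t * Complex.I) * (z : ℂ), rot_mem_circlesInv t z z.2⟩

/-! The rotation preserves norms, so the points `1/(n+1)` and `1/(n+2)`, rotated in lockstep,
never lie on a common orbit. Yet their distance `1/((n+1)(n+2))` is the fraction `1/(n+2)` of
the distance `1/(n+1)` to the only singularity, the origin, and this fraction is arbitrarily
small: no `δ` works, already for `ε = 1`. -/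

open Complex

section FlowCriterion

variable [MetricSpace X] {φ : ℝ → X → X} {Λ : Set X}

theorem not_singularExpansiveOn_of_forall_exists_notMem_flowOrbit (hφ : IsFlowMap φ)
    (h : ∀ δ > 0, ∃ x ∈ Λ, ∃ y ∈ Λ, y ∉ flowOrbit φ x ∧
      ∀ t, dist (φ t x) (φ t y) ≤ δ * distToSet (φ t x) (SingSet φ)) :
    ¬ SingularExpansiveOn φ Λ := by
  intro hexp
  obtain ⟨-, hφ0, hφadd⟩ := hφ
  obtain ⟨δ, hδ, hshadow⟩ := hexp 1 one_pos
  obtain ⟨x, hx, y, hy, hyx, hclose⟩ := h δ hδ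
  obtain ⟨t₀, τ, -, heq⟩ := hshadow x hx y hy id
    ⟨continuous_id, strictMono_id, Function.bijective_id⟩ hclose
  refine hyx ⟨τ - t₀, ?_⟩
  calc φ (τ - t₀) x = φ (-t₀) (φ τ x) := by rw [← hφadd, neg_add_eq_sub]
    _ = φ (-t₀ + t₀) y := by rw [← heq, id, hφadd]
    _ = y := by rw [neg_add_cancel, hφ0]

end FlowCriterion

lemma rotFlowInv_coe (t : ℝ) (z : circlesInv) :
    (rotFlowInv t z : ℂ) = exp (t * I) * z := rfl

lemma norm_rotFlowInv (t : ℝ) (z : circlesInv) : ‖(rotFlowInv t z : ℂ)‖ = ‖(z : ℂ)‖ := by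
  rw [rotFlowInv_coe, norm_mul, norm_exp_ofReal_mul_I, one_mul]

lemma dist_rotFlowInv (t : ℝ) (z w : circlesInv) :
    dist (rotFlowInv t z) (rotFlowInv t w) = dist z w := by
  rw [Subtype.dist_eq, Subtype.dist_eq, rotFlowInv_coe, rotFlowInv_coe, dist_eq, dist_eq,
    ← mul_sub, norm_mul, norm_exp_ofReal_mul_I, one_mul]

lemma norm_eq_of_mem_flowOrbit_rotFlowInv {z w : circlesInv}
    (h : w ∈ flowOrbit rotFlowInv z) : ‖(w : ℂ)‖ = ‖(z : ℂ)‖ := by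
  obtain ⟨t, rfl⟩ := h
  exact norm_rotFlowInv t z

lemma isFlowMap_rotFlowInv : IsFlowMap rotFlowInv := by
  refine ⟨?_, fun z => Subtype.ext ?_, fun t s z => Subtype.ext ?_⟩
  · exact ((continuous_exp.comp ((continuous_ofReal.comp continuous_fst).mul
      continuous_const)).mul (continuous_subtype_val.comp continuous_snd)).subtype_mk _
  · simp [rotFlowInv_coe]
  · simp only [rotFlowInv_coe, ofReal_add, add_mul, exp_add, mul_assoc]

lemma singSet_rotFlowInv : SingSet rotFlowInv = {⟨0, Or.inl rfl⟩} := by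
  ext z
  refine ⟨fun hz => Subtype.ext ?_, ?_⟩
  · have hπ : exp (Real.pi * I) * z = z := congrArg Subtype.val (hz Real.pi)
    rw [exp_pi_mul_I] at hπ
    linear_combination (-1 / 2 : ℂ) * hπ
  · rintro rfl t
    exact Subtype.ext (mul_zero _)

lemma distToSet_singSet_rotFlowInv (z : circlesInv) :
    distToSet z (SingSet rotFlowInv) = ‖(z : ℂ)‖ := by
  rw [distToSet, singSet_rotFlowInv, if_neg (singleton_ne_empty _), infDist_singleton,
    Subtype.dist_eq, dist_zero_right]

noncomputable def circlePoint (n : ℕ) : circlesInv :=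
  ⟨((1 / ((n : ℝ) + 1) : ℝ) : ℂ), Or.inr (mem_iUnion.2 ⟨n, by
    rw [mem_ofPred_eq, norm_real, Real.norm_eq_abs, abs_of_pos (by positivity)]⟩)⟩

lemma norm_circlePoint (n : ℕ) : ‖(circlePoint n : ℂ)‖ = 1 / ((n : ℝ) + 1) := by
  rw [circlePoint, norm_real, Real.norm_eq_abs, abs_of_pos (by positivity)]

lemma dist_circlePoint_succ (n : ℕ) :
    dist (circlePoint n) (circlePoint (n + 1)) = 1 / ((n : ℝ) + 2) * (1 / ((n : ℝ) + 1)) := by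
  rw [Subtype.dist_eq, circlePoint, circlePoint, dist_eq, ← ofReal_sub, norm_real,
    Real.norm_eq_abs, abs_of_nonneg]
  · push_cast
    field_simp
    ring
  · push_cast
    rw [sub_nonneg]
    gcongr
    linarith

lemma circlePoint_succ_notMem_flowOrbit (n : ℕ) :
    circlePoint (n + 1) ∉ flowOrbit rotFlowInv (circlePoint n) := by
  intro h
  have hnorm := norm_eq_of_mem_flowOrbit_rotFlowInv h
  rw [norm_circlePoint, norm_circlePoint] at hnorm
  push_cast at hnorm
  field_simp at hnorm
  linarith

/-- The rotation flow on the union of the origin and the circles of radii `1/n`, `n ≥ 1`,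
is a well-defined flow which is not singular-expansive. -/
theorem rotation_flow_on_inv_circles_not_singular_expansive :
    IsFlowMap rotFlowInv ∧ ¬ SingularExpansiveOn rotFlowInv Set.univ := by
  refine ⟨isFlowMap_rotFlowInv,
    not_singularExpansiveOn_of_forall_exists_notMem_flowOrbit isFlowMap_rotFlowInv ?_⟩
  intro δ hδ
  obtain ⟨n, hn⟩ := exists_nat_one_div_lt hδ
  refine ⟨circlePoint n, trivial, circlePoint (n + 1), trivial,
    circlePoint_succ_notMem_flowOrbit n, fun t => ?_⟩
  rw [dist_rotFlowInv, distToSet_singSet_rotFlowInv, norm_rotFlowInv, dist_circlePoint_succ,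
    norm_circlePoint]
  gcongr
  calc 1 / ((n : ℝ) + 2) ≤ 1 / ((n : ℝ) + 1) := by gcongr; linarith
    _ ≤ δ := hn.le
end
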